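/- For the hypergraph L(22) (the construction L(2n) with n = 11: atoms a₀,...,a₂₁ indexed mod 22, blocks {a_{2i},a_{2i+1},a_{2i+2}} and {a_{2i−5},a_{2i},a_{2i+5}} for i = 0,...,10), there is exactly one state: the constant function s ≡ 1/3. -/
import Mathlib

set_option maxRecDepth 4000
set_option maxHeartbeats 1000000


/-- The blocks of the hypergraph L(22): atoms indexed by ℤ/22ℤ, with blocks
{a_{2i}, a_{2i+1}, a_{2i+2}} and {a_{2i-5}, a_{2i}, a_{2i+5}} for i = 0,...,10,
indices modulo 22. -/
def L22Blocks : Finset (Finset (ZMod 22)) :=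
  ((Finset.range 11).image (fun i =>
    ({((2 * i : ℕ) : ZMod 22), ((2 * i + 1 : ℕ) : ZMod 22),
      ((2 * i + 2 : ℕ) : ZMod 22)} : Finset (ZMod 22)))) ∪
  ((Finset.range 11).image (fun i =>
    ({((2 * i : ℕ) : ZMod 22) - 5, ((2 * i : ℕ) : ZMod 22),
      ((2 * i : ℕ) : ZMod 22) + 5} : Finset (ZMod 22))))

/-- L(22) has exactly one state: `s` is nonnegative with all block sums equal to 1
iff `s` is the constant function 1/3. -/
theorem L22_unique_state (s : ZMod 22 → ℝ) :
    ((∀ a, 0 ≤ s a) ∧ ∀ b ∈ L22Blocks, ∑ a ∈ b, s a = 1) ↔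
      s = fun _ => (1/3 : ℝ) := by
  constructor
  · intro h
    have hA0 : s 0 + (s 1 + s 2) = 1 := by
      have := h.2 {(0:ZMod 22), 1, 2} (by decide)
      rwa [Finset.sum_insert (by decide), Finset.sum_insert (by decide),
        Finset.sum_singleton] at this
    have hB0 : s 17 + (s 0 + s 5) = 1 := by
      have := h.2 {(17:ZMod 22), 0, 5} (by decide)
      rwa [Finset.sum_insert (by decide), Finset.sum_insert (by decide),
        Finset.sum_singleton] at this
    have hA1 : s 2 + (s 3 + s 4) = 1 := by
      have := h.2 {(2:ZMod 22), 3, 4} (by decide)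
      rwa [Finset.sum_insert (by decide), Finset.sum_insert (by decide),
        Finset.sum_singleton] at this
    have hB1 : s 19 + (s 2 + s 7) = 1 := by
      have := h.2 {(19:ZMod 22), 2, 7} (by decide)
      rwa [Finset.sum_insert (by decide), Finset.sum_insert (by decide),
        Finset.sum_singleton] at this
    have hA2 : s 4 + (s 5 + s 6) = 1 := by
      have := h.2 {(4:ZMod 22), 5, 6} (by decide)
      rwa [Finset.sum_insert (by decide), Finset.sum_insert (by decide),
        Finset.sum_singleton] at this
    have hB2 : s 21 + (s 4 + s 9) = 1 := by
      have := h.2 {(21:ZMod 22), 4, 9} (by decide)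
      rwa [Finset.sum_insert (by decide), Finset.sum_insert (by decide),
        Finset.sum_singleton] at this
    have hA3 : s 6 + (s 7 + s 8) = 1 := by
      have := h.2 {(6:ZMod 22), 7, 8} (by decide)
      rwa [Finset.sum_insert (by decide), Finset.sum_insert (by decide),
        Finset.sum_singleton] at this
    have hB3 : s 1 + (s 6 + s 11) = 1 := by
      have := h.2 {(1:ZMod 22), 6, 11} (by decide)
      rwa [Finset.sum_insert (by decide), Finset.sum_insert (by decide),
        Finset.sum_singleton] at this
    have hA4 : s 8 + (s 9 + s 10) = 1 := by
      have := h.2 {(8:ZMod 22), 9, 10} (by decide)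
      rwa [Finset.sum_insert (by decide), Finset.sum_insert (by decide),
        Finset.sum_singleton] at this
    have hB4 : s 3 + (s 8 + s 13) = 1 := by
      have := h.2 {(3:ZMod 22), 8, 13} (by decide)
      rwa [Finset.sum_insert (by decide), Finset.sum_insert (by decide),
        Finset.sum_singleton] at this
    have hA5 : s 10 + (s 11 + s 12) = 1 := by
      have := h.2 {(10:ZMod 22), 11, 12} (by decide)
      rwa [Finset.sum_insert (by decide), Finset.sum_insert (by decide),
        Finset.sum_singleton] at this
    have hB5 : s 5 + (s 10 + s 15) = 1 := by
      have := h.2 {(5:ZMod 22), 10, 15} (by decide)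
      rwa [Finset.sum_insert (by decide), Finset.sum_insert (by decide),
        Finset.sum_singleton] at this
    have hA6 : s 12 + (s 13 + s 14) = 1 := by
      have := h.2 {(12:ZMod 22), 13, 14} (by decide)
      rwa [Finset.sum_insert (by decide), Finset.sum_insert (by decide),
        Finset.sum_singleton] at this
    have hB6 : s 7 + (s 12 + s 17) = 1 := by
      have := h.2 {(7:ZMod 22), 12, 17} (by decide)
      rwa [Finset.sum_insert (by decide), Finset.sum_insert (by decide),
        Finset.sum_singleton] at this
    have hA7 : s 14 + (s 15 + s 16) = 1 := by
      have := h.2 {(14:ZMod 22), 15, 16} (by decide)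
      rwa [Finset.sum_insert (by decide), Finset.sum_insert (by decide),
        Finset.sum_singleton] at this
    have hB7 : s 9 + (s 14 + s 19) = 1 := by
      have := h.2 {(9:ZMod 22), 14, 19} (by decide)
      rwa [Finset.sum_insert (by decide), Finset.sum_insert (by decide),
        Finset.sum_singleton] at this
    have hA8 : s 16 + (s 17 + s 18) = 1 := by
      have := h.2 {(16:ZMod 22), 17, 18} (by decide)
      rwa [Finset.sum_insert (by decide), Finset.sum_insert (by decide),
        Finset.sum_singleton] at this
    have hB8 : s 11 + (s 16 + s 21) = 1 := by
      have := h.2 {(11:ZMod 22), 16, 21} (by decide)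
      rwa [Finset.sum_insert (by decide), Finset.sum_insert (by decide),
        Finset.sum_singleton] at this
    have hA9 : s 18 + (s 19 + s 20) = 1 := by
      have := h.2 {(18:ZMod 22), 19, 20} (by decide)
      rwa [Finset.sum_insert (by decide), Finset.sum_insert (by decide),
        Finset.sum_singleton] at this
    have hB9 : s 13 + (s 18 + s 1) = 1 := by
      have := h.2 {(13:ZMod 22), 18, 1} (by decide)
      rwa [Finset.sum_insert (by decide), Finset.sum_insert (by decide),
        Finset.sum_singleton] at this
    have hA10 : s 20 + (s 21 + s 0) = 1 := by
      have := h.2 {(20:ZMod 22), 21, 0} (by decide)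
      rwa [Finset.sum_insert (by decide), Finset.sum_insert (by decide),
        Finset.sum_singleton] at this
    have hB10 : s 15 + (s 20 + s 3) = 1 := by
      have := h.2 {(15:ZMod 22), 20, 3} (by decide)
      rwa [Finset.sum_insert (by decide), Finset.sum_insert (by decide),
        Finset.sum_singleton] at this
    have e0 : s 0 = 1/3 := by linarith [hA0, hB0, hA1, hB1, hA2, hB2, hA3, hB3, hA4, hB4, hA5, hB5, hA6, hB6, hA7, hB7, hA8, hB8, hA9, hB9, hA10, hB10]
    have e1 : s 1 = 1/3 := by linarith [hA0, hB0, hA1, hB1, hA2, hB2, hA3, hB3, hA4, hB4, hA5, hB5, hA6, hB6, hA7, hB7, hA8, hB8, hA9, hB9, hA10, hB10]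
    have e2 : s 2 = 1/3 := by linarith [hA0, hB0, hA1, hB1, hA2, hB2, hA3, hB3, hA4, hB4, hA5, hB5, hA6, hB6, hA7, hB7, hA8, hB8, hA9, hB9, hA10, hB10]
    have e3 : s 3 = 1/3 := by linarith [hA0, hB0, hA1, hB1, hA2, hB2, hA3, hB3, hA4, hB4, hA5, hB5, hA6, hB6, hA7, hB7, hA8, hB8, hA9, hB9, hA10, hB10]
    have e4 : s 4 = 1/3 := by linarith [hA0, hB0, hA1, hB1, hA2, hB2, hA3, hB3, hA4, hB4, hA5, hB5, hA6, hB6, hA7, hB7, hA8, hB8, hA9, hB9, hA10, hB10]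
    have e5 : s 5 = 1/3 := by linarith [hA0, hB0, hA1, hB1, hA2, hB2, hA3, hB3, hA4, hB4, hA5, hB5, hA6, hB6, hA7, hB7, hA8, hB8, hA9, hB9, hA10, hB10]
    have e6 : s 6 = 1/3 := by linarith [hA0, hB0, hA1, hB1, hA2, hB2, hA3, hB3, hA4, hB4, hA5, hB5, hA6, hB6, hA7, hB7, hA8, hB8, hA9, hB9, hA10, hB10]
    have e7 : s 7 = 1/3 := by linarith [hA0, hB0, hA1, hB1, hA2, hB2, hA3, hB3, hA4, hB4, hA5, hB5, hA6, hB6, hA7, hB7, hA8, hB8, hA9, hB9, hA10, hB10]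
    have e8 : s 8 = 1/3 := by linarith [hA0, hB0, hA1, hB1, hA2, hB2, hA3, hB3, hA4, hB4, hA5, hB5, hA6, hB6, hA7, hB7, hA8, hB8, hA9, hB9, hA10, hB10]
    have e9 : s 9 = 1/3 := by linarith [hA0, hB0, hA1, hB1, hA2, hB2, hA3, hB3, hA4, hB4, hA5, hB5, hA6, hB6, hA7, hB7, hA8, hB8, hA9, hB9, hA10, hB10]
    have e10 : s 10 = 1/3 := by linarith [hA0, hB0, hA1, hB1, hA2, hB2, hA3, hB3, hA4, hB4, hA5, hB5, hA6, hB6, hA7, hB7, hA8, hB8, hA9, hB9, hA10, hB10]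
    have e11 : s 11 = 1/3 := by linarith [hA0, hB0, hA1, hB1, hA2, hB2, hA3, hB3, hA4, hB4, hA5, hB5, hA6, hB6, hA7, hB7, hA8, hB8, hA9, hB9, hA10, hB10]
    have e12 : s 12 = 1/3 := by linarith [hA0, hB0, hA1, hB1, hA2, hB2, hA3, hB3, hA4, hB4, hA5, hB5, hA6, hB6, hA7, hB7, hA8, hB8, hA9, hB9, hA10, hB10]
    have e13 : s 13 = 1/3 := by linarith [hA0, hB0, hA1, hB1, hA2, hB2, hA3, hB3, hA4, hB4, hA5, hB5, hA6, hB6, hA7, hB7, hA8, hB8, hA9, hB9, hA10, hB10]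
    have e14 : s 14 = 1/3 := by linarith [hA0, hB0, hA1, hB1, hA2, hB2, hA3, hB3, hA4, hB4, hA5, hB5, hA6, hB6, hA7, hB7, hA8, hB8, hA9, hB9, hA10, hB10]
    have e15 : s 15 = 1/3 := by linarith [hA0, hB0, hA1, hB1, hA2, hB2, hA3, hB3, hA4, hB4, hA5, hB5, hA6, hB6, hA7, hB7, hA8, hB8, hA9, hB9, hA10, hB10]
    have e16 : s 16 = 1/3 := by linarith [hA0, hB0, hA1, hB1, hA2, hB2, hA3, hB3, hA4, hB4, hA5, hB5, hA6, hB6, hA7, hB7, hA8, hB8, hA9, hB9, hA10, hB10]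
    have e17 : s 17 = 1/3 := by linarith [hA0, hB0, hA1, hB1, hA2, hB2, hA3, hB3, hA4, hB4, hA5, hB5, hA6, hB6, hA7, hB7, hA8, hB8, hA9, hB9, hA10, hB10]
    have e18 : s 18 = 1/3 := by linarith [hA0, hB0, hA1, hB1, hA2, hB2, hA3, hB3, hA4, hB4, hA5, hB5, hA6, hB6, hA7, hB7, hA8, hB8, hA9, hB9, hA10, hB10]
    have e19 : s 19 = 1/3 := by linarith [hA0, hB0, hA1, hB1, hA2, hB2, hA3, hB3, hA4, hB4, hA5, hB5, hA6, hB6, hA7, hB7, hA8, hB8, hA9, hB9, hA10, hB10]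
    have e20 : s 20 = 1/3 := by linarith [hA0, hB0, hA1, hB1, hA2, hB2, hA3, hB3, hA4, hB4, hA5, hB5, hA6, hB6, hA7, hB7, hA8, hB8, hA9, hB9, hA10, hB10]
    have e21 : s 21 = 1/3 := by linarith [hA0, hB0, hA1, hB1, hA2, hB2, hA3, hB3, hA4, hB4, hA5, hB5, hA6, hB6, hA7, hB7, hA8, hB8, hA9, hB9, hA10, hB10]
    funext a
    fin_cases a <;> [exact e0; exact e1; exact e2; exact e3; exact e4; exact e5; exact e6; exact e7; exact e8; exact e9; exact e10; exact e11; exact e12; exact e13; exact e14; exact e15; exact e16; exact e17; exact e18; exact e19; exact e20; exact e21]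
  · rintro rfl
    refine ⟨fun a => by norm_num, fun b hb => ?_⟩
    have hc : b.card = 3 := by
      rw [L22Blocks, Finset.mem_union] at hb
      rcases hb with hb | hb <;> rw [Finset.mem_image] at hb <;>
        obtain ⟨i, hi, rfl⟩ := hb <;> rw [Finset.mem_range] at hi <;>
        interval_cases i <;> decide
    rw [Finset.sum_const, hc]
    norm_num
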